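/- arXiv:2102.12326 — 2 statements merged into one kernel-verified Lean document; each statement's English description precedes it below -/
import Mathlib

section
/- Let R be a commutative ring equipped with an involutive ring automorphism r ↦ r̄, let n, k ≥ 1, let x_1, x_2, x_3 ∈ R, let Y be any kn×kn matrix over R of the form Y = circ(A_0,…,A_{k−1}) with each A_i an n×n circulant matrix, let X_2 and X_3 be the 1×kn row vectors all of whose entries equal x_2 and x_3 respectively, and let X be the (kn+1)×(kn+1) block matrix X = [[x_1, X_2], [X_3^T, Y]]. Then X·(X̄)^T = −I_{kn+1} if and only if all of the following hold: (i) 1 + x_1·x̄_1 + (kn)·x_2·x̄_2 = 0 (where (kn)·r denotes the kn-fold sum of r); (ii) x_1·x̄_3 + x_2·σ = 0, where σ is the sum of the conjugates of all entries of the generating vectors of A_0,…,A_{k−1}; (iii) Y·(Ȳ)^T = −(x_3·x̄_3)·E − I_{kn}, where E is the kn×kn all-ones matrix. -/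
open Matrix

/-- The circulant matrix generated by `a`: the (i,j) entry is `a ((j - i) mod n)`;
here given via `a (j - i)` if `i ≤ j` and `a (n + j - i)` otherwise. -/
def circ {R : Type*} [CommRing R] (n : ℕ) (a : ℕ → R) : Matrix (Fin n) (Fin n) R :=
  Matrix.of fun i j => if (i : ℕ) ≤ (j : ℕ) then a ((j : ℕ) - i) else a (n + j - i)

/-- The kn×kn block circulant matrix with n×n blocks `A 0, …, A (k-1)`. -/
def blockCirc {R : Type*} [CommRing R] (k n : ℕ) (A : ℕ → Matrix (Fin n) (Fin n) R) :
    Matrix (Fin k × Fin n) (Fin k × Fin n) R :=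
  Matrix.of fun p q =>
    if (p.1 : ℕ) ≤ (q.1 : ℕ) then A ((q.1 : ℕ) - p.1) p.2 q.2
    else A (k + q.1 - p.1) p.2 q.2

lemma fin_sub_val {n : ℕ} [NeZero n] (i j : Fin n) :
    ((j - i : Fin n) : ℕ) = if (i : ℕ) ≤ (j : ℕ) then (j : ℕ) - i else n + j - i := by
  rw [Fin.sub_def]
  have hi := i.isLt
  have hj := j.isLt
  split
  · next h =>
    have : n - (i : ℕ) + j = ((j : ℕ) - i) + n := by omega
    simp only [this, Nat.add_mod_right]
    exact Nat.mod_eq_of_lt (by omega)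
  · next h =>
    have hlt : n - (i : ℕ) + j < n := by omega
    simp only [Nat.mod_eq_of_lt hlt]
    omega

lemma circ_apply {R : Type*} [CommRing R] (n : ℕ) [NeZero n] (a : ℕ → R) (i j : Fin n) :
    circ n a i j = a ((j - i : Fin n) : ℕ) := by
  rw [fin_sub_val, apply_ite a]; rfl

lemma blockCirc_apply {R : Type*} [CommRing R] (k n : ℕ) [NeZero k]
    (A : ℕ → Matrix (Fin n) (Fin n) R) (p q : Fin k × Fin n) :
    blockCirc k n A p q = A ((q.1 - p.1 : Fin k) : ℕ) p.2 q.2 := by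
  rw [fin_sub_val, apply_ite (fun m => A m p.2 q.2)]; rfl

lemma sum_sub_reindex {M : Type*} [AddCommMonoid M] {n : ℕ} [NeZero n] (f : Fin n → M)
    (i : Fin n) : ∑ j : Fin n, f (j - i) = ∑ j : Fin n, f j :=
  Equiv.sum_comp (Equiv.subRight i) f

theorem stmt13 {R : Type*} [CommRing R] (σ : R ≃+* R) (hσ : Function.Involutive σ)
    (n k : ℕ) (hn : 1 ≤ n) (hk : 1 ≤ k) (x₁ x₂ x₃ : R) (a : ℕ → ℕ → R)
    (Y : Matrix (Fin k × Fin n) (Fin k × Fin n) R)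
    (hY : Y = blockCirc k n (fun i => circ n (a i)))
    (X : Matrix (Unit ⊕ Fin k × Fin n) (Unit ⊕ Fin k × Fin n) R)
    (hX : X = Matrix.fromBlocks (Matrix.of fun _ _ => x₁) (Matrix.of fun _ _ => x₂)
        (Matrix.of fun _ _ => x₃) Y) :
    X * (X.map σ)ᵀ = -1
      ↔ (1 + x₁ * σ x₁ + (k * n) • (x₂ * σ x₂) = 0
          ∧ x₁ * σ x₃ + x₂ * ∑ i ∈ Finset.range k, ∑ s ∈ Finset.range n, σ (a i s) = 0
          ∧ Y * (Y.map σ)ᵀ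
              = -((x₃ * σ x₃) • (Matrix.of fun _ _ => (1 : R)
                  : Matrix (Fin k × Fin n) (Fin k × Fin n) R)) - 1) := by
  haveI : NeZero n := ⟨by omega⟩
  haveI : NeZero k := ⟨by omega⟩
  set S : R := ∑ i ∈ Finset.range k, ∑ s ∈ Finset.range n, a i s with hS
  have hσS : σ S = ∑ i ∈ Finset.range k, ∑ s ∈ Finset.range n, σ (a i s) := by
    simp [hS, map_sum]
  rw [← hσS]
  -- row sums of Y
  have hrow : ∀ q : Fin k × Fin n, ∑ p : Fin k × Fin n, Y q p = S := by
    intro q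
    rw [hY, Fintype.sum_prod_type]
    have h0 : ∀ (c : Fin k) (t : Fin n),
        blockCirc k n (fun i => circ n (a i)) q (c, t)
          = a ((c - q.1 : Fin k) : ℕ) ((t - q.2 : Fin n) : ℕ) := by
      intro c t; rw [blockCirc_apply, circ_apply]
    simp only [h0]
    have h1 : ∀ c : Fin k,
        ∑ t : Fin n, a ((c - q.1 : Fin k) : ℕ) ((t - q.2 : Fin n) : ℕ)
          = ∑ t : Fin n, a ((c - q.1 : Fin k) : ℕ) (t : ℕ) := fun c =>
      sum_sub_reindex (fun t => a ((c - q.1 : Fin k) : ℕ) (t : ℕ)) q.2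
    simp only [h1]
    rw [sum_sub_reindex (fun c => ∑ t : Fin n, a (c : ℕ) (t : ℕ)) q.1]
    have h2 : ∀ c : ℕ, ∑ t : Fin n, a c (t : ℕ) = ∑ s ∈ Finset.range n, a c s :=
      fun c => Fin.sum_univ_eq_sum_range _ n
    simp only [h2]
    rw [hS]
    exact Fin.sum_univ_eq_sum_range (fun c => ∑ s ∈ Finset.range n, a c s) k
  have hZ : (X.map σ)ᵀ = Matrix.fromBlocks (Matrix.of fun _ _ => σ x₁)
      (Matrix.of fun _ _ => σ x₃) (Matrix.of fun _ _ => σ x₂) (Y.map σ)ᵀ := by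
    rw [hX, fromBlocks_map, fromBlocks_transpose]
    rfl
  have hprod : X * (X.map σ)ᵀ = Matrix.fromBlocks
      (Matrix.of fun _ _ => x₁ * σ x₁ + (k * n) • (x₂ * σ x₂))
      (Matrix.of fun _ _ => x₁ * σ x₃ + x₂ * σ S)
      (Matrix.of fun _ _ => x₃ * σ x₁ + S * σ x₂)
      ((x₃ * σ x₃) • (Matrix.of fun _ _ => (1 : R)) + Y * (Y.map σ)ᵀ) := by
    rw [hZ, hX, fromBlocks_multiply]
    have eA : ((Matrix.of fun _ _ => x₁ : Matrix Unit Unit R) * (Matrix.of fun _ _ => σ x₁ : Matrix Unit Unit R)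
          + (Matrix.of fun _ _ => x₂ : Matrix Unit (Fin k × Fin n) R) * (Matrix.of fun _ _ => σ x₂ : Matrix (Fin k × Fin n) Unit R) :
          Matrix Unit Unit R)
        = Matrix.of fun _ _ => x₁ * σ x₁ + (k * n) • (x₂ * σ x₂) := by
      ext i j
      simp only [Matrix.add_apply, Matrix.mul_apply, Matrix.of_apply,
        Finset.sum_const, Finset.card_univ, Fintype.card_prod, Fintype.card_fin,
        Fintype.card_unit, one_smul]
    have eB : ((Matrix.of fun _ _ => x₁ : Matrix Unit Unit R) * (Matrix.of fun _ _ => σ x₃ : Matrix Unit (Fin k × Fin n) R)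
          + (Matrix.of fun _ _ => x₂ : Matrix Unit (Fin k × Fin n) R) * (Y.map σ)ᵀ : Matrix Unit (Fin k × Fin n) R)
        = Matrix.of fun _ _ => x₁ * σ x₃ + x₂ * σ S := by
      ext i q
      simp only [Matrix.add_apply, Matrix.mul_apply, Matrix.of_apply,
        Matrix.transpose_apply, Matrix.map_apply, Finset.sum_const,
        Finset.card_univ, Fintype.card_unit, one_smul]
      rw [← Finset.mul_sum, ← map_sum, hrow]
    have eC : ((Matrix.of fun _ _ => x₃ : Matrix (Fin k × Fin n) Unit R) * (Matrix.of fun _ _ => σ x₁ : Matrix Unit Unit R)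
          + Y * (Matrix.of fun _ _ => σ x₂ : Matrix (Fin k × Fin n) Unit R) : Matrix (Fin k × Fin n) Unit R)
        = Matrix.of fun _ _ => x₃ * σ x₁ + S * σ x₂ := by
      ext p j
      simp only [Matrix.add_apply, Matrix.mul_apply, Matrix.of_apply,
        Finset.sum_const, Finset.card_univ, Fintype.card_unit, one_smul]
      rw [← Finset.sum_mul, hrow]
    have eD : ((Matrix.of fun _ _ => x₃ : Matrix (Fin k × Fin n) Unit R) * (Matrix.of fun _ _ => σ x₃ : Matrix Unit (Fin k × Fin n) R)
          + Y * (Y.map σ)ᵀ : Matrix (Fin k × Fin n) (Fin k × Fin n) R)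
        = (x₃ * σ x₃) • (Matrix.of fun _ _ => (1 : R)) + Y * (Y.map σ)ᵀ := by
      ext p q
      simp [Matrix.mul_apply, Matrix.add_apply, Matrix.smul_apply, smul_eq_mul]
    rw [eA, eB, eC, eD]
  have hneg : (-1 : Matrix (Unit ⊕ Fin k × Fin n) (Unit ⊕ Fin k × Fin n) R)
      = Matrix.fromBlocks (-1) 0 0 (-1) := by
    rw [← Matrix.fromBlocks_one, Matrix.fromBlocks_neg]
    simp only [neg_zero]
  rw [hprod, hneg, Matrix.fromBlocks_inj]
  have p₀ : Fin k × Fin n := ⟨⟨0, by omega⟩, ⟨0, by omega⟩⟩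
  have iA : (Matrix.of fun _ _ => x₁ * σ x₁ + (k * n) • (x₂ * σ x₂))
      = (-1 : Matrix Unit Unit R) ↔ 1 + x₁ * σ x₁ + (k * n) • (x₂ * σ x₂) = 0 := by
    constructor
    · intro h
      have := congrFun (congrFun h ()) ()
      simp only [Matrix.of_apply, Matrix.neg_apply, Matrix.one_apply_eq] at this
      linear_combination this
    · intro h
      ext i j
      simp only [Matrix.of_apply, Matrix.neg_apply, Matrix.one_apply_eq]
      linear_combination h
  have iB : (Matrix.of fun _ _ => x₁ * σ x₃ + x₂ * σ S)
      = (0 : Matrix Unit (Fin k × Fin n) R) ↔ x₁ * σ x₃ + x₂ * σ S = 0 := by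
    constructor
    · intro h
      have := congrFun (congrFun h ()) p₀
      simpa using this
    · intro h; ext i j; simpa using h
  have iC : (Matrix.of fun _ _ => x₃ * σ x₁ + S * σ x₂)
      = (0 : Matrix (Fin k × Fin n) Unit R) ↔ x₃ * σ x₁ + S * σ x₂ = 0 := by
    constructor
    · intro h
      have := congrFun (congrFun h p₀) ()
      simpa using this
    · intro h; ext i j; simpa using h
  have hCB : x₁ * σ x₃ + x₂ * σ S = 0 ↔ x₃ * σ x₁ + S * σ x₂ = 0 := by
    constructor
    · intro h
      have := congrArg σ h
      simp only [map_add, _root_.map_mul, hσ x₃, hσ S, map_zero] at this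
      linear_combination this
    · intro h
      have := congrArg σ h
      simp only [map_add, _root_.map_mul, hσ x₁, hσ x₂, map_zero] at this
      linear_combination this
  have iD : (x₃ * σ x₃) • (Matrix.of fun _ _ => (1 : R)) + Y * (Y.map σ)ᵀ
      = (-1 : Matrix (Fin k × Fin n) (Fin k × Fin n) R)
      ↔ Y * (Y.map σ)ᵀ
        = -((x₃ * σ x₃) • (Matrix.of fun _ _ => (1 : R)
            : Matrix (Fin k × Fin n) (Fin k × Fin n) R)) - 1 := by
    constructor
    · intro h
      have h' := eq_sub_of_add_eq' h
      rw [h']; abel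
    · intro h; rw [h]; abel
  constructor
  · rintro ⟨hA, hB, _, hD⟩
    exact ⟨iA.mp hA, iB.mp hB, iD.mp hD⟩
  · rintro ⟨h1, h2, h3⟩
    exact ⟨iA.mpr h1, iB.mpr h2, iC.mpr (hCB.mp h2), iD.mpr h3⟩
end

section
/- Let R be a commutative ring equipped with an involutive ring automorphism r ↦ r̄, and let G' be an n×2n matrix over R with rows r_1,…,r_n satisfying G'·(Ḡ')^T = 0 (all rows are pairwise Hermitian orthogonal and Hermitian self-orthogonal). Let ε ∈ R satisfy ε·ε̄ = −1, let δ ∈ R^{2n} satisfy ⟨δ,δ⟩_H = −1, and set γ_i = ⟨r_i, δ⟩_H for i = 1,…,n. Let G be the (n+1)×(2n+2) matrix whose first row is (1, 0, δ) and whose (i+1)-st row is (−γ_i, ε·γ_i, r_i) for i = 1,…,n. Then G·(Ḡ)^T = 0. -/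
open Matrix

/-- The building-up matrix: first row is `(1, 0, δ)` and the row indexed by `i : Fin n`
is `(-γ i, ε * γ i, r_i)` where `r_i` is the `i`-th row of `G'`. -/
def buildUp {R : Type*} [CommRing R] {n m : ℕ} (G' : Matrix (Fin n) (Fin m) R)
    (ε : R) (δ : Fin m → R) (γ : Fin n → R) :
    Matrix (Unit ⊕ Fin n) (Fin 2 ⊕ Fin m) R :=
  Matrix.of (Sum.elim
    (fun _ => Sum.elim (fun j => if j = 0 then (1 : R) else 0) δ)
    (fun i => Sum.elim (fun j => if j = 0 then -γ i else ε * γ i) (G' i)))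

theorem stmt15 {R : Type*} [CommRing R] (σ : R ≃+* R) (hσ : Function.Involutive σ)
    (n : ℕ) (hn : 1 ≤ n) (G' : Matrix (Fin n) (Fin (2 * n)) R)
    (horth : G' * (G'.map σ)ᵀ = 0)
    (ε : R) (hε : ε * σ ε = -1)
    (δ : Fin (2 * n) → R) (hδ : ∑ c, δ c * σ (δ c) = -1)
    (γ : Fin n → R) (hγ : ∀ i, γ i = ∑ c, G' i c * σ (δ c)) :
    buildUp G' ε δ γ * ((buildUp G' ε δ γ).map σ)ᵀ = 0 := by
  have hσγ : ∀ i, σ (γ i) = ∑ c, σ (G' i c) * δ c := by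
    intro i
    rw [hγ i, map_sum]
    exact Finset.sum_congr rfl fun c _ => by rw [_root_.map_mul, hσ (δ c)]
  have hGG : ∀ i k, ∑ c, G' i c * σ (G' k c) = 0 := by
    intro i k
    have := congrFun (congrFun horth i) k
    simpa [Matrix.mul_apply] using this
  ext a b
  rcases a with _ | i <;> rcases b with _ | k <;>
    simp only [Matrix.mul_apply, Matrix.map_apply, Matrix.transpose_apply, buildUp,
      Matrix.of_apply, Sum.elim_inl, Sum.elim_inr, Fintype.sum_sum_type,
      Fin.sum_univ_two, Matrix.zero_apply]
  · simp [hδ]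
  · -- unit, i
    have : ∑ c, δ c * σ (G' k c) = σ (γ k) := by
      rw [hσγ k]
      exact Finset.sum_congr rfl fun c _ => mul_comm _ _
    simp [this]
  · -- i, unit
    have : ∑ c, G' i c * σ (δ c) = γ i := (hγ i).symm
    simp [this]
  · -- i, k
    simp only [ite_true, show ((1 : Fin 2) = 0) = False by simp, ite_false]
    rw [hGG i k, _root_.map_neg, _root_.map_mul]
    linear_combination (γ i * σ (γ k)) * hε
end
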